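/- Under assumptions (A1)–(A2), let u be a global minimizer of the regularized WED functional W^{ελ} over K₀(u₀). Then ∫₀ᵀ ‖u̇(t)‖_H² dt ≤ c₄(φ¹_λ(u₀) + φ²_λ(u₀)) ≤ c₄(φ¹(u₀) + φ²(u₀)); in particular the L²(0,T;H)-norm of u̇ is bounded independently of ε and λ. -/

import Mathlib

open MeasureTheory Filter Topology
open scoped RealInnerProductSpace ENNReal

/-- The subdifferential (in `H`) of an extended-real-valued functional `f`:
`η ∈ ∂f(u)` iff `u ∈ D(f)` and `(η, v − u) ≤ f(v) − f(u)` for all `v`. -/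
def InSubdiff {H : Type*} [NormedAddCommGroup H] [InnerProductSpace ℝ H]
    (f : H → ℝ≥0∞) (u η : H) : Prop :=
  f u ≠ ⊤ ∧ ∀ v : H, f v ≠ ⊤ → ⟪η, v - u⟫ ≤ (f v).toReal - (f u).toReal

/-- Moreau–Yosida regularization of `f` at level `lam` (extended-real-valued). -/
noncomputable def MYe {H : Type*} [NormedAddCommGroup H] [InnerProductSpace ℝ H]
    (f : H → ℝ≥0∞) (lam : ℝ) (u : H) : ℝ≥0∞ :=
  ⨅ v : H, ENNReal.ofReal (‖u - v‖ ^ 2 / (2 * lam)) + f v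

/-- The functional `φ¹(u) = ⟨Au,u⟩/2` if `u = ι x ∈ X`, `∞` otherwise, encoded through the
continuous symmetric bilinear form `a x y = ⟨Ax,y⟩` on `X`. -/
noncomputable def phiOne {X H : Type*}
    [NormedAddCommGroup X] [InnerProductSpace ℝ X]
    [NormedAddCommGroup H] [InnerProductSpace ℝ H]
    (ι : X →L[ℝ] H) (a : X →L[ℝ] X →L[ℝ] ℝ) (u : H) : ℝ≥0∞ :=
  ⨅ (x : X) (_ : ι x = u), ENNReal.ofReal (a x x / 2)

/-- Membership in `H¹(0,T;H)`, witnessed by the a.e. derivative `u'`. -/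
def InH1 {H : Type*} [NormedAddCommGroup H] [InnerProductSpace ℝ H] [CompleteSpace H]
    (T : ℝ) (u u' : ℝ → H) : Prop :=
  ContinuousOn u (Set.Icc 0 T) ∧
  MemLp u' 2 (volume.restrict (Set.Ioc 0 T)) ∧
  ∀ t ∈ Set.Icc 0 T, u t = u 0 + ∫ s in (0:ℝ)..t, u' s

/-- The (possibly regularized) WED integral
`∫₀ᵀ e^{−t/ε} ( ε ψ(Jl u, u̇) + f₁(u) + f₂(u) ) dt`, as an extended real number. -/
noncomputable def WEDval {H : Type*} [NormedAddCommGroup H] [InnerProductSpace ℝ H]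
    (ψ : H → H → ℝ) (f₁ f₂ : H → ℝ≥0∞) (ε T : ℝ) (Jl : H → H) (u u' : ℝ → H) : ℝ≥0∞ :=
  ∫⁻ t in Set.Ioc 0 T, ENNReal.ofReal (Real.exp (-t / ε)) *
    (ENNReal.ofReal (ε * ψ (Jl (u t)) (u' t)) + f₁ (u t) + f₂ (u t))

/-!
Comparing the minimizer `u` with the competitor `t ↦ u (min t s)`, frozen from time `s` on, gives
the tail estimate `∫ₛᵀ e^{-t/ε} (ε ψ(J_λ u, u̇) + φ_λ(u)) dt ≤ ε e^{-s/ε} φ_λ(u(s))`, where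
`φ_λ = φ¹_λ + φ²_λ`. Multiplying by `e^{s/ε}/ε` and integrating in `s` (Tonelli) bounds
`∫₀ᵀ (1 - e^{-t/ε}) (ε ψ + φ_λ(u))` by `∫₀ᵀ φ_λ(u)`; adding the case `s = 0` and cancelling
`∫₀ᵀ φ_λ(u)`, which is finite because `φ_λ` is bounded on the bounded trajectory, leaves
`∫₀ᵀ ψ(J_λ u, u̇) ≤ φ_λ(u₀)`. The coercivity `‖v‖² ≤ c₄ ψ(u, v)` and `φ_λ ≤ φ` conclude.
-/

open Set
open scoped NNReal

theorem setLIntegral_ofReal_Ioc_eq_sub {g F : ℝ → ℝ} (hg : Continuous g) (hg₀ : 0 ≤ g) {a b : ℝ}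
    (hab : a ≤ b) (hF : ∀ x, HasDerivAt F (g x) x) :
    ∫⁻ t in Ioc a b, ENNReal.ofReal (g t) = ENNReal.ofReal (F b - F a) := by
  rw [← ofReal_integral_eq_lintegral_ofReal hg.integrableOn_Ioc (ae_of_all _ hg₀),
    ← intervalIntegral.integral_of_le hab,
    intervalIntegral.integral_eq_sub_of_hasDerivAt (fun x _ => hF x) (hg.intervalIntegrable a b)]

theorem setLIntegral_Ioc_mul_setLIntegral_Ioc {k h : ℝ → ℝ≥0∞} (hk : Measurable k)
    (hh : Measurable h) (a b : ℝ) :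
    ∫⁻ s in Ioc a b, k s * ∫⁻ t in Ioc s b, h t =
      ∫⁻ t in Ioc a b, (∫⁻ s in Ioo a t, k s) * h t := by
  set F : ℝ → ℝ → ℝ≥0∞ := fun s t =>
    {p : ℝ × ℝ | p.1 < p.2}.indicator (fun p => k p.1 * h p.2) (s, t)
  have hF : Measurable (Function.uncurry F) :=
    ((hk.comp measurable_fst).mul (hh.comp measurable_snd)).indicator
      (measurableSet_lt measurable_fst measurable_snd)
  have hleft : ∀ s ∈ Ioc a b, k s * ∫⁻ t in Ioc s b, h t = ∫⁻ t in Ioc a b, F s t := by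
    intro s hs
    have : Ioi s ∩ Ioc a b = Ioc s b := by
      ext x; simp only [mem_inter_iff, mem_Ioi, mem_Ioc]
      constructor
      · exact fun hx => ⟨hx.1, hx.2.2⟩
      · exact fun hx => ⟨hx.1, hs.1.trans hx.1, hx.2⟩
    rw [← this, ← Measure.restrict_restrict measurableSet_Ioi,
      ← lintegral_indicator measurableSet_Ioi,
      ← lintegral_const_mul _ (hh.indicator measurableSet_Ioi)]
    congr 1 with t
    by_cases hst : s < t <;> simp [F, indicator, hst]
  have hright : ∀ t ∈ Ioc a b, (∫⁻ s in Ioo a t, k s) * h t = ∫⁻ s in Ioc a b, F s t := by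
    intro t ht
    have : Iio t ∩ Ioc a b = Ioo a t := by
      ext x; simp only [mem_inter_iff, mem_Iio, mem_Ioc, mem_Ioo]
      constructor
      · exact fun hx => ⟨hx.2.1, hx.1⟩
      · exact fun hx => ⟨hx.2, hx.1, hx.2.le.trans ht.2⟩
    rw [← this, ← Measure.restrict_restrict measurableSet_Iio,
      ← lintegral_indicator measurableSet_Iio,
      ← lintegral_mul_const _ (hk.indicator measurableSet_Iio)]
    congr 1 with s
    by_cases hst : s < t <;> simp [F, indicator, hst]
  rw [setLIntegral_congr_fun measurableSet_Ioc hleft,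
    setLIntegral_congr_fun measurableSet_Ioc hright]
  exact lintegral_lintegral_swap hF.aemeasurable

section ExponentialWeight

variable {ε T : ℝ}

theorem setLIntegral_exp_neg_div_Ioc_le (hε : 0 < ε) {s : ℝ} (hsT : s ≤ T) :
    ∫⁻ t in Ioc s T, ENNReal.ofReal (Real.exp (-t / ε)) ≤
      ENNReal.ofReal (ε * Real.exp (-s / ε)) := by
  have hF (x : ℝ) : HasDerivAt (fun t => -ε * Real.exp (-t / ε)) (Real.exp (-x / ε)) x := by
    have hlin : HasDerivAt (fun t : ℝ => -t / ε) (-1 / ε) x := (hasDerivAt_neg x).div_const ε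
    exact (hlin.exp.const_mul (-ε)).congr_deriv (by field_simp)
  rw [setLIntegral_ofReal_Ioc_eq_sub (by fun_prop) (fun x => (Real.exp_pos _).le) hsT hF]
  exact ENNReal.ofReal_le_ofReal (by nlinarith [Real.exp_pos (-T / ε)])

theorem setLIntegral_exp_div_div_Ioo (hε : 0 < ε) {t : ℝ} (ht : 0 ≤ t) :
    ∫⁻ s in Ioo 0 t, ENNReal.ofReal (Real.exp (s / ε) / ε) =
      ENNReal.ofReal (Real.exp (t / ε) - 1) := by
  have hF (x : ℝ) : HasDerivAt (fun s => Real.exp (s / ε)) (Real.exp (x / ε) / ε) x := by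
    convert ((hasDerivAt_id' x).div_const ε).exp using 1
    ring
  rw [Measure.restrict_congr_set Ioo_ae_eq_Ioc,
    setLIntegral_ofReal_Ioc_eq_sub (by fun_prop) (fun x => by positivity) ht hF]
  simp

theorem setLIntegral_one_sub_exp_mul_le (hε : 0 < ε) {g B : ℝ → ℝ≥0∞}
    (hg : AEMeasurable g (volume.restrict (Ioc 0 T)))
    (htail : ∀ s ∈ Ioc 0 T, ∫⁻ t in Ioc s T, ENNReal.ofReal (Real.exp (-t / ε)) * g t ≤
      ENNReal.ofReal (ε * Real.exp (-s / ε)) * B s) :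
    ∫⁻ t in Ioc 0 T, ENNReal.ofReal (1 - Real.exp (-t / ε)) * g t ≤ ∫⁻ t in Ioc 0 T, B t := by
  set w : ℝ → ℝ≥0∞ := fun t => ENNReal.ofReal (Real.exp (-t / ε))
  set k : ℝ → ℝ≥0∞ := fun s => ENNReal.ofReal (Real.exp (s / ε) / ε)
  have hw : Measurable w := by fun_prop
  have hk : Measurable k := by fun_prop
  have hkw (s : ℝ) : k s * ENNReal.ofReal (ε * Real.exp (-s / ε)) = 1 := by
    rw [← ENNReal.ofReal_mul (by positivity), neg_div, Real.exp_neg]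
    field_simp
    simp
  have hweight (t : ℝ) (ht : 0 ≤ t) :
      ENNReal.ofReal (1 - Real.exp (-t / ε)) = (∫⁻ s in Ioo 0 t, k s) * w t := by
    have hexp : 1 ≤ Real.exp (t / ε) := Real.one_le_exp (div_nonneg ht hε.le)
    rw [setLIntegral_exp_div_div_Ioo hε ht, ← ENNReal.ofReal_mul (by linarith), sub_mul, one_mul,
      ← Real.exp_add, neg_div, add_neg_cancel, Real.exp_zero]
  let g' := hg.mk g
  have hg'_ae : g =ᵐ[volume.restrict (Ioc 0 T)] g' := hg.ae_eq_mk
  calc ∫⁻ t in Ioc 0 T, ENNReal.ofReal (1 - Real.exp (-t / ε)) * g t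
      = ∫⁻ t in Ioc 0 T, (∫⁻ s in Ioo 0 t, k s) * (w t * g' t) := by
        refine lintegral_congr_ae ?_
        filter_upwards [hg'_ae, ae_restrict_mem measurableSet_Ioc] with t hgt ht
        rw [hweight t ht.1.le, hgt, mul_assoc]
    _ = ∫⁻ s in Ioc 0 T, k s * ∫⁻ t in Ioc s T, w t * g' t :=
        (setLIntegral_Ioc_mul_setLIntegral_Ioc hk (hw.mul hg.measurable_mk) 0 T).symm
    _ ≤ ∫⁻ s in Ioc 0 T, B s := by
        refine setLIntegral_mono' measurableSet_Ioc fun s hs => ?_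
        have hg'_tail : ∫⁻ t in Ioc s T, w t * g' t = ∫⁻ t in Ioc s T, w t * g t := by
          refine lintegral_congr_ae ?_
          filter_upwards [ae_restrict_of_ae_restrict_of_subset (Ioc_subset_Ioc_left hs.1.le)
            hg'_ae] with t ht
          rw [ht]
        calc k s * ∫⁻ t in Ioc s T, w t * g' t
            ≤ k s * (ENNReal.ofReal (ε * Real.exp (-s / ε)) * B s) := by
              rw [hg'_tail]; gcongr; exact htail s hs
          _ = B s := by rw [← mul_assoc, hkw, one_mul]

theorem setLIntegral_le_of_exp_tail_le (hε : 0 < ε) (hT : 0 ≤ T) {D B : ℝ → ℝ≥0∞}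
    (hD : AEMeasurable D (volume.restrict (Ioc 0 T)))
    (hB : AEMeasurable B (volume.restrict (Ioc 0 T)))
    (hB_fin : ∫⁻ t in Ioc 0 T, B t ≠ ∞)
    (htail : ∀ s ∈ Icc 0 T, ∫⁻ t in Ioc s T,
      ENNReal.ofReal (Real.exp (-t / ε)) * (ENNReal.ofReal ε * D t + B t) ≤
        ENNReal.ofReal (ε * Real.exp (-s / ε)) * B s) :
    ∫⁻ t in Ioc 0 T, D t ≤ B 0 := by
  set g : ℝ → ℝ≥0∞ := fun t => ENNReal.ofReal ε * D t + B t
  have hg : AEMeasurable g (volume.restrict (Ioc 0 T)) := (hD.const_mul _).add hB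
  have hsplit : ∫⁻ t in Ioc 0 T, g t =
      (∫⁻ t in Ioc 0 T, ENNReal.ofReal (1 - Real.exp (-t / ε)) * g t) +
        ∫⁻ t in Ioc 0 T, ENNReal.ofReal (Real.exp (-t / ε)) * g t := by
    have hmeas : AEMeasurable (fun t => ENNReal.ofReal (1 - Real.exp (-t / ε)) * g t)
        (volume.restrict (Ioc 0 T)) := by fun_prop
    rw [← lintegral_add_left' hmeas]
    refine setLIntegral_congr_fun measurableSet_Ioc fun t ht => ?_
    have hexp : Real.exp (-t / ε) ≤ 1 :=
      Real.exp_le_one_iff.mpr (by rw [neg_div]; exact neg_nonpos.mpr (div_nonneg ht.1.le hε.le))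
    rw [← add_mul, ← ENNReal.ofReal_add (by linarith) (Real.exp_pos _).le, sub_add_cancel,
      ENNReal.ofReal_one, one_mul]
  have hfull : ∫⁻ t in Ioc 0 T, ENNReal.ofReal (Real.exp (-t / ε)) * g t ≤
      ENNReal.ofReal ε * B 0 := by
    simpa using htail 0 ⟨le_rfl, hT⟩
  have hsum : ENNReal.ofReal ε * (∫⁻ t in Ioc 0 T, D t) + ∫⁻ t in Ioc 0 T, B t ≤
      ENNReal.ofReal ε * B 0 + ∫⁻ t in Ioc 0 T, B t := by
    calc ENNReal.ofReal ε * (∫⁻ t in Ioc 0 T, D t) + ∫⁻ t in Ioc 0 T, B t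
        = ∫⁻ t in Ioc 0 T, g t := by
          rw [lintegral_add_left' (hD.const_mul _), lintegral_const_mul'' _ hD]
      _ ≤ (∫⁻ t in Ioc 0 T, B t) + ENNReal.ofReal ε * B 0 := by
          rw [hsplit]
          exact add_le_add (setLIntegral_one_sub_exp_mul_le hε hg
            fun s hs => htail s (Ioc_subset_Icc_self hs)) hfull
      _ = ENNReal.ofReal ε * B 0 + ∫⁻ t in Ioc 0 T, B t := add_comm _ _
  have hε' : ENNReal.ofReal ε ≠ 0 := ENNReal.ofReal_ne_zero_iff.mpr hε
  exact (ENNReal.mul_le_mul_iff_right hε' ENNReal.ofReal_ne_top).mp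
    ((ENNReal.add_le_add_iff_right hB_fin).mp hsum)

end ExponentialWeight

section WED

variable {H : Type*} [NormedAddCommGroup H] [InnerProductSpace ℝ H]
  {ψ : H → H → ℝ} {f₁ f₂ : H → ℝ≥0∞} {ε T s : ℝ} {Jl : H → H} {u u' : ℝ → H}

variable (ψ f₁ f₂ ε Jl) in
noncomputable def wedIntegrand (u u' : ℝ → H) (t : ℝ) : ℝ≥0∞ :=
  ENNReal.ofReal (Real.exp (-t / ε)) *
    (ENNReal.ofReal (ε * ψ (Jl (u t)) (u' t)) + f₁ (u t) + f₂ (u t))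

theorem InH1.comp_min [CompleteSpace H] (hu : InH1 T u u') (hs : 0 ≤ s) :
    InH1 T (fun t => u (min t s)) ((Iic s).indicator u') := by
  obtain ⟨hu_cont, hu'_L2, hu_int⟩ := hu
  refine ⟨hu_cont.comp (by fun_prop) fun t ht => ⟨le_min ht.1 hs, min_le_of_left_le ht.2⟩,
    hu'_L2.indicator measurableSet_Iic, fun t ht => ?_⟩
  simp only [min_eq_left hs]
  rcases le_or_gt t s with hts | hst
  · rw [min_eq_left hts, hu_int t ht]
    congr 1
    refine intervalIntegral.integral_congr fun x hx => ?_
    rw [uIcc_of_le ht.1] at hx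
    simp [indicator_of_mem (show x ∈ Iic s from hx.2.trans hts)]
  · have hu'_int : IntegrableOn u' (Ioc 0 T) := hu'_L2.integrable one_le_two
    have hint (a b : ℝ) (hab : a ≤ b) (h0 : 0 ≤ a) (hbT : b ≤ T) :
        IntervalIntegrable ((Iic s).indicator u') volume a b := by
      rw [intervalIntegrable_iff_integrableOn_Ioc_of_le hab]
      exact (hu'_int.mono_set (Ioc_subset_Ioc h0 hbT)).indicator measurableSet_Iic
    rw [min_eq_right hst.le, hu_int s ⟨hs, hst.le.trans ht.2⟩,
      ← intervalIntegral.integral_add_adjacent_intervals (hint 0 s hs le_rfl (hst.le.trans ht.2))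
        (hint s t hst.le hs ht.2)]
    have hhead : ∫ x in (0:ℝ)..s, (Iic s).indicator u' x = ∫ x in (0:ℝ)..s, u' x := by
      refine intervalIntegral.integral_congr fun x hx => ?_
      rw [uIcc_of_le hs] at hx
      simp [indicator_of_mem (show x ∈ Iic s from hx.2)]
    have htail : ∫ x in s..t, (Iic s).indicator u' x = 0 := by
      rw [intervalIntegral.integral_of_le hst.le]
      refine setIntegral_eq_zero_of_forall_eq_zero fun x hx => ?_
      simp [indicator_of_notMem (show x ∉ Iic s from not_le.mpr hx.1)]
    rw [hhead, htail, add_zero]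

theorem WEDval_eq_add (hs : s ∈ Icc 0 T) :
    WEDval ψ f₁ f₂ ε T Jl u u' =
      (∫⁻ t in Ioc 0 s, wedIntegrand ψ f₁ f₂ ε Jl u u' t) +
        ∫⁻ t in Ioc s T, wedIntegrand ψ f₁ f₂ ε Jl u u' t := by
  rw [WEDval, ← Ioc_union_Ioc_eq_Ioc hs.1 hs.2,
    lintegral_union measurableSet_Ioc (Ioc_disjoint_Ioc_of_le le_rfl)]
  rfl

theorem WEDval_comp_min (hψ0 : ∀ w, ψ w 0 = 0) (hs : s ∈ Icc 0 T) :
    WEDval ψ f₁ f₂ ε T Jl (fun t => u (min t s)) ((Iic s).indicator u') =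
      (∫⁻ t in Ioc 0 s, wedIntegrand ψ f₁ f₂ ε Jl u u' t) +
        (∫⁻ t in Ioc s T, ENNReal.ofReal (Real.exp (-t / ε))) * (f₁ (u s) + f₂ (u s)) := by
  rw [WEDval_eq_add hs, ← lintegral_mul_const _ (by fun_prop)]
  congr 1
  · refine setLIntegral_congr_fun measurableSet_Ioc fun t ht => ?_
    simp [wedIntegrand, min_eq_left ht.2, indicator_of_mem (show t ∈ Iic s from ht.2)]
  · refine setLIntegral_congr_fun measurableSet_Ioc fun t ht => ?_
    simp [wedIntegrand, min_eq_right ht.1.le,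
      indicator_of_notMem (show t ∉ Iic s from not_le.mpr ht.1), hψ0]

theorem setLIntegral_wedIntegrand_Ioc_le [CompleteSpace H] (hε : 0 < ε) (hψ0 : ∀ w, ψ w 0 = 0)
    (hu : InH1 T u u') (hB₀ : f₁ (u 0) + f₂ (u 0) ≠ ∞)
    (hmin : ∀ v v' : ℝ → H, InH1 T v v' → v 0 = u 0 →
      WEDval ψ f₁ f₂ ε T Jl u u' ≤ WEDval ψ f₁ f₂ ε T Jl v v')
    (hs : s ∈ Icc 0 T) :
    ∫⁻ t in Ioc s T, wedIntegrand ψ f₁ f₂ ε Jl u u' t ≤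
      ENNReal.ofReal (ε * Real.exp (-s / ε)) * (f₁ (u s) + f₂ (u s)) := by
  have hT : (0 : ℝ) ∈ Icc 0 T := ⟨le_rfl, hs.1.trans hs.2⟩
  have hcompare (r : ℝ) (hr : r ∈ Icc 0 T) :=
    hmin _ _ (hu.comp_min hr.1) (by simp only [min_eq_left hr.1])
  have hW_fin : WEDval ψ f₁ f₂ ε T Jl u u' ≠ ∞ := by
    refine ne_top_of_le_ne_top ?_ (hcompare 0 hT)
    rw [WEDval_comp_min hψ0 hT, Ioc_self, Measure.restrict_empty, lintegral_zero_measure, zero_add]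
    exact ENNReal.mul_ne_top
      (ne_top_of_le_ne_top ENNReal.ofReal_ne_top (setLIntegral_exp_neg_div_Ioc_le hε hT.2)) hB₀
  rw [WEDval_eq_add hs] at hW_fin
  have h := hcompare s hs
  rw [WEDval_eq_add hs, WEDval_comp_min hψ0 hs,
    ENNReal.add_le_add_iff_left (ENNReal.add_ne_top.mp hW_fin).1] at h
  exact h.trans (by gcongr; exact setLIntegral_exp_neg_div_Ioc_le hε hs.2)

theorem setLIntegral_dissipation_le_of_minimizer [CompleteSpace H] [MeasurableSpace H]
    [BorelSpace H] (hε : 0 < ε) (hT : 0 ≤ T) (hψ : Continuous (Function.uncurry ψ))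
    (hJl : Continuous Jl) (hf₁ : Measurable f₁) (hf₂ : Measurable f₂) (hψ0 : ∀ w, ψ w 0 = 0)
    (hu : InH1 T u u')
    (hB₀ : f₁ (u 0) + f₂ (u 0) ≠ ∞) (hB_fin : ∫⁻ t in Ioc 0 T, (f₁ (u t) + f₂ (u t)) ≠ ∞)
    (hmin : ∀ v v' : ℝ → H, InH1 T v v' → v 0 = u 0 →
      WEDval ψ f₁ f₂ ε T Jl u u' ≤ WEDval ψ f₁ f₂ ε T Jl v v') :
    ∫⁻ t in Ioc 0 T, ENNReal.ofReal (ψ (Jl (u t)) (u' t)) ≤ f₁ (u 0) + f₂ (u 0) := by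
  have hu_meas : AEStronglyMeasurable u (volume.restrict (Ioc 0 T)) :=
    (hu.1.aestronglyMeasurable measurableSet_Icc).mono_measure
      (Measure.restrict_mono Ioc_subset_Icc_self le_rfl)
  refine setLIntegral_le_of_exp_tail_le (B := fun t => f₁ (u t) + f₂ (u t)) hε hT ?_ ?_ hB_fin
    fun s hs => ?_
  · exact ENNReal.measurable_ofReal.comp_aemeasurable (hψ.comp_aestronglyMeasurable₂
      (hJl.comp_aestronglyMeasurable hu_meas) hu.2.1.aestronglyMeasurable).aemeasurable
  · exact (hf₁.comp_aemeasurable hu_meas.aemeasurable).add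
      (hf₂.comp_aemeasurable hu_meas.aemeasurable)
  · convert setLIntegral_wedIntegrand_Ioc_le hε hψ0 hu hB₀ hmin hs using 3 with t
    rw [wedIntegrand, ENNReal.ofReal_mul hε.le, add_assoc]

end WED

section MoreauYosida

variable {H : Type*} [NormedAddCommGroup H] [InnerProductSpace ℝ H] (f : H → ℝ≥0∞) {lam : ℝ}

theorem MYe_le (lam : ℝ) (u v : H) :
    MYe f lam u ≤ ENNReal.ofReal (‖u - v‖ ^ 2 / (2 * lam)) + f v :=
  iInf_le (fun v => ENNReal.ofReal (‖u - v‖ ^ 2 / (2 * lam)) + f v) v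

theorem MYe_le_self (lam : ℝ) (u : H) : MYe f lam u ≤ f u := by
  simpa using MYe_le f lam u u

theorem upperSemicontinuous_MYe (lam : ℝ) : UpperSemicontinuous (MYe f lam) :=
  upperSemicontinuous_iInf fun _ =>
    ((ENNReal.continuous_ofReal.comp (by fun_prop)).add continuous_const).upperSemicontinuous

theorem exists_forall_MYe_le_of_isBounded (hlam : 0 < lam) {S : Set H}
    (hS : Bornology.IsBounded S) {w : H} (hw : f w ≠ ∞) :
    ∃ M : ℝ≥0, ∀ v ∈ S, MYe f lam v ≤ M := by
  obtain ⟨R, hR⟩ := hS.subset_closedBall w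
  refine ⟨(ENNReal.ofReal (R ^ 2 / (2 * lam)) + f w).toNNReal, fun v hv => ?_⟩
  have hvw : ‖v - w‖ ≤ R := mem_closedBall_iff_norm.mp (hR hv)
  rw [ENNReal.coe_toNNReal (ENNReal.add_ne_top.mpr ⟨ENNReal.ofReal_ne_top, hw⟩)]
  refine (MYe_le f lam v w).trans ?_
  gcongr

end MoreauYosida

theorem integral_le_mul_toReal_of_norm_le {α : Type*} [MeasurableSpace α] {μ : Measure α}
    {F Ψ : α → ℝ} {c : ℝ} {B : ℝ≥0∞} (hc : 0 ≤ c) (hF : ∀ x, ‖F x‖ ≤ c * Ψ x) (hB : B ≠ ∞)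
    (hΨ : ∫⁻ x, ENNReal.ofReal (Ψ x) ∂μ ≤ B) :
    ∫ x, F x ∂μ ≤ c * B.toReal := by
  have hlint : ∫⁻ x, ENNReal.ofReal ‖F x‖ ∂μ ≤ ENNReal.ofReal (c * B.toReal) :=
    calc ∫⁻ x, ENNReal.ofReal ‖F x‖ ∂μ
        ≤ ∫⁻ x, ENNReal.ofReal c * ENNReal.ofReal (Ψ x) ∂μ := lintegral_mono fun x => by
          rw [← ENNReal.ofReal_mul hc]
          exact ENNReal.ofReal_le_ofReal (hF x)
      _ = ENNReal.ofReal c * ∫⁻ x, ENNReal.ofReal (Ψ x) ∂μ :=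
          lintegral_const_mul' _ _ ENNReal.ofReal_ne_top
      _ ≤ ENNReal.ofReal (c * B.toReal) := by
          rw [ENNReal.ofReal_mul hc, ENNReal.ofReal_toReal hB]
          gcongr
  calc ∫ x, F x ∂μ ≤ ‖∫ x, F x ∂μ‖ := Real.le_norm_self _
    _ ≤ (∫⁻ x, ENNReal.ofReal ‖F x‖ ∂μ).toReal := norm_integral_le_lintegral_norm F
    _ ≤ c * B.toReal := ENNReal.toReal_le_of_le_ofReal (by positivity) hlint

theorem stmt_11_general {X H : Type*}
    [NormedAddCommGroup X] [InnerProductSpace ℝ X]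
    [NormedAddCommGroup H] [InnerProductSpace ℝ H] [CompleteSpace H]
    (T : ℝ) (hT : 0 < T)
    -- (A1): the embedding ι : X → H and the operator A (as a bilinear form a on X)
    (ι : X →L[ℝ] H)
    (a : X →L[ℝ] X →L[ℝ] ℝ)
    (φ2 : H → ℝ≥0∞)
    (u₀ : H) (hu₀1 : phiOne ι a u₀ ≠ ⊤) (hu₀2 : φ2 u₀ ≠ ⊤)
    -- (A2): the dissipation potential ψ
    (ψ : H → H → ℝ)
    (hψC2 : ContDiff ℝ 2 (fun p : H × H => ψ p.1 p.2))
    (hψ0 : ∀ u : H, ψ u 0 = 0)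
    (c₄ : ℝ) (hc₄ : 0 < c₄) (hcoer4 : ∀ u v : H, ‖v‖ ^ 2 ≤ c₄ * ψ u v)
    -- the regularization parameters, the resolvents J_λ of ∂φ¹ and I_λ of ∂φ²
    (ε lam : ℝ) (hε : 0 < ε) (hlam : 0 < lam)
    (Jl : H →L[ℝ] H)
    -- u is a global minimizer of W^{ελ} over K₀(u₀)
    (u u' : ℝ → H) (huH1 : InH1 T u u') (hu0 : u 0 = u₀)
    (hmin : ∀ v v' : ℝ → H, InH1 T v v' → v 0 = u₀ →
      WEDval ψ (MYe (phiOne ι a) lam) (MYe φ2 lam) ε T (fun w => Jl w) u u' ≤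
        WEDval ψ (MYe (phiOne ι a) lam) (MYe φ2 lam) ε T (fun w => Jl w) v v')
    :
    (∫ t in Set.Ioc 0 T, ‖u' t‖ ^ 2) ≤
        c₄ * ((MYe (phiOne ι a) lam u₀).toReal + (MYe φ2 lam u₀).toReal) ∧
      c₄ * ((MYe (phiOne ι a) lam u₀).toReal + (MYe φ2 lam u₀).toReal) ≤
        c₄ * ((phiOne ι a u₀).toReal + (φ2 u₀).toReal) := by
  subst hu0
  borelize H
  have hMYe₁ := ne_top_of_le_ne_top hu₀1 (MYe_le_self (phiOne ι a) lam (u 0))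
  have hMYe₂ := ne_top_of_le_ne_top hu₀2 (MYe_le_self φ2 lam (u 0))
  have hB_fin : ∫⁻ t in Ioc 0 T, (MYe (phiOne ι a) lam (u t) + MYe φ2 lam (u t)) ≠ ∞ := by
    have hS := (isCompact_Icc.image_of_continuousOn huH1.1).isBounded
    obtain ⟨M₁, hM₁⟩ := exists_forall_MYe_le_of_isBounded (phiOne ι a) hlam hS hu₀1
    obtain ⟨M₂, hM₂⟩ := exists_forall_MYe_le_of_isBounded φ2 hlam hS hu₀2
    refine (setLIntegral_lt_top_of_le_nnreal measure_Ioc_lt_top.ne ⟨M₁ + M₂, fun t ht => ?_⟩).ne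
    have ht' : u t ∈ u '' Icc 0 T := mem_image_of_mem u (Ioc_subset_Icc_self ht)
    exact (add_le_add (hM₁ _ ht') (hM₂ _ ht')).trans_eq (ENNReal.coe_add _ _).symm
  have hdiss := setLIntegral_dissipation_le_of_minimizer hε hT.le hψC2.continuous Jl.continuous
    (upperSemicontinuous_MYe _ lam).measurable (upperSemicontinuous_MYe _ lam).measurable hψ0 huH1
    (ENNReal.add_ne_top.mpr ⟨hMYe₁, hMYe₂⟩) hB_fin hmin
  refine ⟨?_, mul_le_mul_of_nonneg_left (add_le_add ?_ ?_) hc₄.le⟩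
  · rw [← ENNReal.toReal_add hMYe₁ hMYe₂]
    refine integral_le_mul_toReal_of_norm_le hc₄.le (fun t => ?_)
      (ENNReal.add_ne_top.mpr ⟨hMYe₁, hMYe₂⟩) hdiss
    rw [norm_pow, norm_norm]
    exact hcoer4 _ _
  · exact ENNReal.toReal_mono hu₀1 (MYe_le_self _ _ _)
  · exact ENNReal.toReal_mono hu₀2 (MYe_le_self _ _ _)

/-- **A priori estimate (3.13):** for a global minimizer `u` of `W^{ελ}`,
`∫₀ᵀ ‖u̇‖² ≤ c₄(φ¹_λ(u₀) + φ²_λ(u₀)) ≤ c₄(φ¹(u₀) + φ²(u₀))`; in particular the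
`L²(0,T;H)`-norm of `u̇` is bounded independently of `ε` and `λ`. -/
theorem stmt_11 {X H : Type*}
    [NormedAddCommGroup X] [InnerProductSpace ℝ X] [CompleteSpace X]
    [TopologicalSpace.SeparableSpace X]
    [NormedAddCommGroup H] [InnerProductSpace ℝ H] [CompleteSpace H]
    [TopologicalSpace.SeparableSpace H]
    (T : ℝ) (hT : 0 < T)
    -- (A1): the embedding ι : X → H and the operator A (as a bilinear form a on X)
    (ι : X →L[ℝ] H) (hι_inj : Function.Injective ι) (hι_dense : DenseRange ι)
    (hι_cpt : IsCompactOperator ι)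
    (a : X →L[ℝ] X →L[ℝ] ℝ) (hsym : ∀ x y : X, a x y = a y x) (hann : ∀ x : X, 0 ≤ a x x)
    (c₁ c₂ c₃ r : ℝ) (hc₁ : 0 < c₁) (hc₂ : 0 < c₂) (hc₃ : 0 < c₃) (hr : 2 ≤ r)
    (hcoer1 : ∀ x : X, ‖x‖ ^ 2 ≤ c₁ * (1 + a x x / 2))
    (hAbdd : ∀ x : X, ‖a x‖ ≤ c₂ * ‖x‖)
    (φ2 : H → ℝ≥0∞) (hproper : ∃ w : H, φ2 w ≠ ⊤)
    (hconv2 : ∀ (w₁ w₂ : H) (s : ℝ), 0 ≤ s → s ≤ 1 →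
      φ2 (s • w₁ + (1 - s) • w₂) ≤ ENNReal.ofReal s * φ2 w₁ + ENNReal.ofReal (1 - s) * φ2 w₂)
    (hlsc2 : LowerSemicontinuous φ2)
    (hgrowth2 : ∀ w η : H, InSubdiff φ2 w η → ‖η‖ ^ r ≤ c₃ * (1 + (φ2 w).toReal))
    (u₀ : H) (hu₀1 : phiOne ι a u₀ ≠ ⊤) (hu₀2 : φ2 u₀ ≠ ⊤)
    -- (A2): the dissipation potential ψ
    (ψ : H → H → ℝ) (hψnn : ∀ u v : H, 0 ≤ ψ u v)
    (hψC2 : ContDiff ℝ 2 (fun p : H × H => ψ p.1 p.2))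
    (hψconv : ∀ u : H, ConvexOn ℝ Set.univ (ψ u)) (hψ0 : ∀ u : H, ψ u 0 = 0)
    (c₄ : ℝ) (hc₄ : 0 < c₄) (hcoer4 : ∀ u v : H, ‖v‖ ^ 2 ≤ c₄ * ψ u v)
    (hA2R : ∀ R : ℝ, 0 < R → ∃ c₅ c₆ c₇ c₈ c₉ c₁₀ : ℝ,
      0 < c₅ ∧ 0 < c₆ ∧ 0 < c₇ ∧ 0 < c₈ ∧ 0 < c₉ ∧ 0 < c₁₀ ∧
      (∀ u v : H, ‖u‖ ≤ R → ‖fderiv ℝ (fun x => ψ x v) u‖ ≤ c₅ * (1 + ‖v‖ ^ 2)) ∧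
      (∀ u₁ u₂ v : H, ‖u₁‖ ≤ R → ‖u₂‖ ≤ R →
        ‖fderiv ℝ (fun x => ψ x v) u₁ - fderiv ℝ (fun x => ψ x v) u₂‖ ≤
          c₆ * ‖u₁ - u₂‖ * ‖v‖ ^ 2) ∧
      (∀ u v : H, ‖u‖ ≤ R → ‖fderiv ℝ (ψ u) v‖ ^ 2 ≤ c₇ * (1 + ‖v‖ ^ 2)) ∧
      (∀ u₁ u₂ v : H, ‖u₁‖ ≤ R → ‖u₂‖ ≤ R →
        ‖fderiv ℝ (ψ u₁) v - fderiv ℝ (ψ u₂) v‖ ≤ c₈ * ‖u₁ - u₂‖ * ‖v‖) ∧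
      (∀ u v w : H, ‖u‖ ≤ R →
        ‖fderiv ℝ (fun y => fderiv ℝ (fun x => ψ x y) u) v w‖ ≤ c₉ * ‖v‖ * ‖w‖) ∧
      (∀ u v w : H, ‖u‖ ≤ R →
        c₁₀ * ‖w‖ ^ 2 ≤ fderiv ℝ (fun y => fderiv ℝ (ψ u) y) v w w))
    -- the regularization parameters, the resolvents J_λ of ∂φ¹ and I_λ of ∂φ²
    (ε lam : ℝ) (hε : 0 < ε) (hlam : 0 < lam)
    (Jl : H →L[ℝ] H) (hJl : ∀ w : H, InSubdiff (phiOne ι a) (Jl w) (lam⁻¹ • (w - Jl w)))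
    (Il : H → H) (hIl : ∀ w : H, InSubdiff φ2 (Il w) (lam⁻¹ • (w - Il w)))
    -- u is a global minimizer of W^{ελ} over K₀(u₀)
    (u u' : ℝ → H) (huH1 : InH1 T u u') (hu0 : u 0 = u₀)
    (hmin : ∀ v v' : ℝ → H, InH1 T v v' → v 0 = u₀ →
      WEDval ψ (MYe (phiOne ι a) lam) (MYe φ2 lam) ε T (fun w => Jl w) u u' ≤
        WEDval ψ (MYe (phiOne ι a) lam) (MYe φ2 lam) ε T (fun w => Jl w) v v')
    :
    (∫ t in Set.Ioc 0 T, ‖u' t‖ ^ 2) ≤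
        c₄ * ((MYe (phiOne ι a) lam u₀).toReal + (MYe φ2 lam u₀).toReal) ∧
      c₄ * ((MYe (phiOne ι a) lam u₀).toReal + (MYe φ2 lam u₀).toReal) ≤
        c₄ * ((phiOne ι a u₀).toReal + (φ2 u₀).toReal) :=
  stmt_11_general T hT ι a φ2 u₀ hu₀1 hu₀2 ψ hψC2 hψ0 c₄ hc₄ hcoer4 ε lam hε hlam Jl u u' huH1 hu0
    hmin
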